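/- Suppose Re(Ω₋) = −Re(Ω₊) (entrywise). Then for every s ∈ ℂ with sI_{2n} − A invertible: (i) if S, C₋, C₊ all have real entries, then G_pq[s] = 0; (ii) if S has real entries and C₋, C₊ are purely imaginary, then G_qp[s] = 0; (iii) if S is purely imaginary and C₋, C₊ have real entries, then G_pp[s] = 0; (iv) if S, C₋, C₊ are all purely imaginary, then G_qq[s] = 0. Each vanishing block expresses a unilateral BAE measurement. -/
import Mathlib


open Matrix

noncomputable section

namespace LQS

/-- Entrywise real part, as a complex matrix. -/
def matRe {k l : ℕ} (X : Matrix (Fin k) (Fin l) ℂ) : Matrix (Fin k) (Fin l) ℂ :=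
  fun i j => ((X i j).re : ℂ)

/-- Entrywise imaginary part, as a complex matrix. -/
def matIm {k l : ℕ} (X : Matrix (Fin k) (Fin l) ℂ) : Matrix (Fin k) (Fin l) ℂ :=
  fun i j => ((X i j).im : ℂ)

/-- A complex matrix has real entries. -/
def isReal {k l : ℕ} (X : Matrix (Fin k) (Fin l) ℂ) : Prop := ∀ i j, (X i j).im = 0

/-- A complex matrix is purely imaginary (every entry has zero real part). -/
def isPurelyImag {k l : ℕ} (X : Matrix (Fin k) (Fin l) ℂ) : Prop := ∀ i j, (X i j).re = 0

/-- The symplectic matrix J_k = [[0, I],[−I, 0]]. -/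
def Jmat (k : ℕ) : Matrix (Fin k ⊕ Fin k) (Fin k ⊕ Fin k) ℂ :=
  fromBlocks 0 1 (-1) 0

/-- D = [[Re S, −Im S],[Im S, Re S]]. -/
def quadD {m : ℕ} (S : Matrix (Fin m) (Fin m) ℂ) :
    Matrix (Fin m ⊕ Fin m) (Fin m ⊕ Fin m) ℂ :=
  fromBlocks (matRe S) (-(matIm S)) (matIm S) (matRe S)

/-- C = [[Re(C₋+C₊), −Im(C₋−C₊)],[Im(C₋+C₊), Re(C₋−C₊)]]. -/
def quadC {m n : ℕ} (Cm Cp : Matrix (Fin m) (Fin n) ℂ) :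
    Matrix (Fin m ⊕ Fin m) (Fin n ⊕ Fin n) ℂ :=
  fromBlocks (matRe (Cm + Cp)) (-(matIm (Cm - Cp))) (matIm (Cm + Cp)) (matRe (Cm - Cp))

/-- B = −[[Re((C₋−C₊)†), −Im((C₋−C₊)†)],[Im((C₋+C₊)†), Re((C₋+C₊)†)]]·D. -/
def quadB {m n : ℕ} (S : Matrix (Fin m) (Fin m) ℂ) (Cm Cp : Matrix (Fin m) (Fin n) ℂ) :
    Matrix (Fin n ⊕ Fin n) (Fin m ⊕ Fin m) ℂ :=
  -(fromBlocks (matRe (Cm - Cp)ᴴ) (-(matIm (Cm - Cp)ᴴ))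
      (matIm (Cm + Cp)ᴴ) (matRe (Cm + Cp)ᴴ)) * quadD S

/-- JH = [[Im(Ω₋+Ω₊), Re(Ω₋−Ω₊)],[−Re(Ω₋+Ω₊), Im(Ω₋−Ω₊)]]. -/
def quadJH {n : ℕ} (Om Op : Matrix (Fin n) (Fin n) ℂ) :
    Matrix (Fin n ⊕ Fin n) (Fin n ⊕ Fin n) ℂ :=
  fromBlocks (matIm (Om + Op)) (matRe (Om - Op)) (-(matRe (Om + Op))) (matIm (Om - Op))

/-- C♯ = −J_n·Cᵀ·J_m. -/
def quadCsharp {m n : ℕ} (Cm Cp : Matrix (Fin m) (Fin n) ℂ) :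
    Matrix (Fin n ⊕ Fin n) (Fin m ⊕ Fin m) ℂ :=
  -(Jmat n) * (quadC Cm Cp)ᵀ * (Jmat m)

/-- A = JH − (1/2)·C♯·C. -/
def quadA {m n : ℕ} (Cm Cp : Matrix (Fin m) (Fin n) ℂ) (Om Op : Matrix (Fin n) (Fin n) ℂ) :
    Matrix (Fin n ⊕ Fin n) (Fin n ⊕ Fin n) ℂ :=
  quadJH Om Op - (1/2 : ℂ) • (quadCsharp Cm Cp * quadC Cm Cp)

/-- Transfer matrix G[s] = D + C(sI − A)⁻¹B. -/
def transferG {m n : ℕ} (S : Matrix (Fin m) (Fin m) ℂ) (Cm Cp : Matrix (Fin m) (Fin n) ℂ)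
    (Om Op : Matrix (Fin n) (Fin n) ℂ) (s : ℂ) :
    Matrix (Fin m ⊕ Fin m) (Fin m ⊕ Fin m) ℂ :=
  quadD S + quadC Cm Cp *
    (s • (1 : Matrix (Fin n ⊕ Fin n) (Fin n ⊕ Fin n) ℂ) - quadA Cm Cp Om Op)⁻¹ *
    quadB S Cm Cp

end LQS

open LQS Matrix

lemma inv_upperTri {p q : Type*} [Fintype p] [Fintype q] [DecidableEq p] [DecidableEq q]
    (N : Matrix (p ⊕ q) (p ⊕ q) ℂ) (h21 : N.toBlocks₂₁ = 0) (hU : IsUnit N) :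
    N⁻¹.toBlocks₂₁ = 0 := by
  rw [← fromBlocks_toBlocks N, h21] at hU ⊢
  rw [isUnit_iff_isUnit_det, det_fromBlocks_zero₂₁] at hU
  haveI := invertibleOfIsUnitDet _ (isUnit_of_mul_isUnit_left hU)
  haveI := invertibleOfIsUnitDet _ (isUnit_of_mul_isUnit_right hU)
  haveI := fromBlocksZero₂₁Invertible N.toBlocks₁₁ N.toBlocks₁₂ N.toBlocks₂₂
  rw [← invOf_eq_nonsing_inv, invOf_fromBlocks_zero₂₁_eq]
  rfl

lemma Mtri_diag {m n : ℕ} (Cm Cp : Matrix (Fin m) (Fin n) ℂ) (Om Op : Matrix (Fin n) (Fin n) ℂ)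
    (X : Matrix (Fin m) (Fin n) ℂ) (Y : Matrix (Fin m) (Fin n) ℂ)
    (hC : quadC Cm Cp = fromBlocks X 0 0 Y) (hO : matRe (Om + Op) = 0) (s : ℂ) :
    (s • (1 : Matrix (Fin n ⊕ Fin n) (Fin n ⊕ Fin n) ℂ) - quadA Cm Cp Om Op).toBlocks₂₁ = 0 := by
  have h1 : (s • (1 : Matrix (Fin n ⊕ Fin n) (Fin n ⊕ Fin n) ℂ))
      = fromBlocks (s • 1) 0 0 (s • 1) := by
    rw [← fromBlocks_one, fromBlocks_smul]; simp
  simp only [quadA, quadJH, quadCsharp, Jmat, hC, hO, sub_eq_add_neg]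
  simp [fromBlocks_transpose, fromBlocks_multiply, fromBlocks_smul, fromBlocks_neg,
    fromBlocks_add, h1, -fromBlocks_one]

lemma Mtri_anti {m n : ℕ} (Cm Cp : Matrix (Fin m) (Fin n) ℂ) (Om Op : Matrix (Fin n) (Fin n) ℂ)
    (X : Matrix (Fin m) (Fin n) ℂ) (Y : Matrix (Fin m) (Fin n) ℂ)
    (hC : quadC Cm Cp = fromBlocks 0 X Y 0) (hO : matRe (Om + Op) = 0) (s : ℂ) :
    (s • (1 : Matrix (Fin n ⊕ Fin n) (Fin n ⊕ Fin n) ℂ) - quadA Cm Cp Om Op).toBlocks₂₁ = 0 := by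
  have h1 : (s • (1 : Matrix (Fin n ⊕ Fin n) (Fin n ⊕ Fin n) ℂ))
      = fromBlocks (s • 1) 0 0 (s • 1) := by
    rw [← fromBlocks_one, fromBlocks_smul]; simp
  simp only [quadA, quadJH, quadCsharp, Jmat, hC, hO, sub_eq_add_neg]
  simp [fromBlocks_transpose, fromBlocks_multiply, fromBlocks_smul, fromBlocks_neg,
    fromBlocks_add, h1, -fromBlocks_one]


/-- Unilateral BAE when Re(Ω₋) = −Re(Ω₊): four cases according to
whether S and C₋, C₊ are real or purely imaginary. -/
theorem stmt_6 {m n : ℕ} (hm : 1 ≤ m) (hn : 1 ≤ n)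
    (S : Matrix (Fin m) (Fin m) ℂ) (Cm Cp : Matrix (Fin m) (Fin n) ℂ)
    (Om Op : Matrix (Fin n) (Fin n) ℂ)
    (hS : S ∈ Matrix.unitaryGroup (Fin m) ℂ)
    (hOmH : Omᴴ = Om) (hOpS : Opᵀ = Op)
    (hRe : ∀ i j, (Om i j).re = -((Op i j).re)) :
    ∀ s : ℂ,
      IsUnit (s • (1 : Matrix (Fin n ⊕ Fin n) (Fin n ⊕ Fin n) ℂ) - quadA Cm Cp Om Op) →
      (isReal S → isReal Cm → isReal Cp →
        (transferG S Cm Cp Om Op s).toBlocks₂₁ = 0) ∧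
      (isReal S → isPurelyImag Cm → isPurelyImag Cp →
        (transferG S Cm Cp Om Op s).toBlocks₁₂ = 0) ∧
      (isPurelyImag S → isReal Cm → isReal Cp →
        (transferG S Cm Cp Om Op s).toBlocks₂₂ = 0) ∧
      (isPurelyImag S → isPurelyImag Cm → isPurelyImag Cp →
        (transferG S Cm Cp Om Op s).toBlocks₁₁ = 0) := by
  intro s hs
  have hO : matRe (Om + Op) = 0 := by
    funext i j; simp [matRe, Matrix.add_apply, hRe i j]
  refine ⟨?_, ?_, ?_, ?_⟩
  · -- all real: G₂₁ = 0
    intro hSr hCmr hCpr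
    have hImS : matIm S = 0 := by funext i j; simp [matIm, hSr i j]
    have h1 : matIm (Cm + Cp) = 0 := by
      funext i j; simp [matIm, Matrix.add_apply, hCmr i j, hCpr i j]
    have h2 : matIm (Cm - Cp) = 0 := by
      funext i j; simp [matIm, Matrix.sub_apply, hCmr i j, hCpr i j]
    have h1h : matIm (Cm + Cp)ᴴ = 0 := by
      funext i j; simp [matIm, conjTranspose_apply, Matrix.add_apply, hCmr j i, hCpr j i]
    have h2h : matIm (Cm - Cp)ᴴ = 0 := by
      funext i j; simp [matIm, conjTranspose_apply, Matrix.sub_apply, hCmr j i, hCpr j i]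
    have hC : quadC Cm Cp = fromBlocks (matRe (Cm + Cp)) 0 0 (matRe (Cm - Cp)) := by
      rw [quadC, h1, h2, neg_zero]
    have hMi := inv_upperTri _ (Mtri_diag Cm Cp Om Op _ _ hC hO s) hs
    simp only [transferG, quadB, quadD, hC, hImS, h1h, h2h, neg_zero]
    rw [← fromBlocks_toBlocks ((s • (1 : Matrix (Fin n ⊕ Fin n) (Fin n ⊕ Fin n) ℂ)
      - quadA Cm Cp Om Op)⁻¹), hMi]
    simp [fromBlocks_multiply, fromBlocks_neg, fromBlocks_add]
  · -- S real, C purely imaginary: G₁₂ = 0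
    intro hSr hCmi hCpi
    have hImS : matIm S = 0 := by funext i j; simp [matIm, hSr i j]
    have h1 : matRe (Cm + Cp) = 0 := by
      funext i j; simp [matRe, Matrix.add_apply, hCmi i j, hCpi i j]
    have h2 : matRe (Cm - Cp) = 0 := by
      funext i j; simp [matRe, Matrix.sub_apply, hCmi i j, hCpi i j]
    have h1h : matRe (Cm + Cp)ᴴ = 0 := by
      funext i j; simp [matRe, conjTranspose_apply, Matrix.add_apply, hCmi j i, hCpi j i]
    have h2h : matRe (Cm - Cp)ᴴ = 0 := by
      funext i j; simp [matRe, conjTranspose_apply, Matrix.sub_apply, hCmi j i, hCpi j i]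
    have hC : quadC Cm Cp = fromBlocks 0 (-(matIm (Cm - Cp))) (matIm (Cm + Cp)) 0 := by
      rw [quadC, h1, h2]
    have hMi := inv_upperTri _ (Mtri_anti Cm Cp Om Op _ _ hC hO s) hs
    simp only [transferG, quadB, quadD, hC, hImS, h1h, h2h, neg_zero]
    rw [← fromBlocks_toBlocks ((s • (1 : Matrix (Fin n ⊕ Fin n) (Fin n ⊕ Fin n) ℂ)
      - quadA Cm Cp Om Op)⁻¹), hMi]
    simp [fromBlocks_multiply, fromBlocks_neg, fromBlocks_add]
  · -- S purely imaginary, C real: G₂₂ = 0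
    intro hSi hCmr hCpr
    have hReS : matRe S = 0 := by funext i j; simp [matRe, hSi i j]
    have h1 : matIm (Cm + Cp) = 0 := by
      funext i j; simp [matIm, Matrix.add_apply, hCmr i j, hCpr i j]
    have h2 : matIm (Cm - Cp) = 0 := by
      funext i j; simp [matIm, Matrix.sub_apply, hCmr i j, hCpr i j]
    have h1h : matIm (Cm + Cp)ᴴ = 0 := by
      funext i j; simp [matIm, conjTranspose_apply, Matrix.add_apply, hCmr j i, hCpr j i]
    have h2h : matIm (Cm - Cp)ᴴ = 0 := by
      funext i j; simp [matIm, conjTranspose_apply, Matrix.sub_apply, hCmr j i, hCpr j i]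
    have hC : quadC Cm Cp = fromBlocks (matRe (Cm + Cp)) 0 0 (matRe (Cm - Cp)) := by
      rw [quadC, h1, h2, neg_zero]
    have hMi := inv_upperTri _ (Mtri_diag Cm Cp Om Op _ _ hC hO s) hs
    simp only [transferG, quadB, quadD, hC, hReS, h1h, h2h, neg_zero]
    rw [← fromBlocks_toBlocks ((s • (1 : Matrix (Fin n ⊕ Fin n) (Fin n ⊕ Fin n) ℂ)
      - quadA Cm Cp Om Op)⁻¹), hMi]
    simp [fromBlocks_multiply, fromBlocks_neg, fromBlocks_add]
  · -- all purely imaginary: G₁₁ = 0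
    intro hSi hCmi hCpi
    have hReS : matRe S = 0 := by funext i j; simp [matRe, hSi i j]
    have h1 : matRe (Cm + Cp) = 0 := by
      funext i j; simp [matRe, Matrix.add_apply, hCmi i j, hCpi i j]
    have h2 : matRe (Cm - Cp) = 0 := by
      funext i j; simp [matRe, Matrix.sub_apply, hCmi i j, hCpi i j]
    have h1h : matRe (Cm + Cp)ᴴ = 0 := by
      funext i j; simp [matRe, conjTranspose_apply, Matrix.add_apply, hCmi j i, hCpi j i]
    have h2h : matRe (Cm - Cp)ᴴ = 0 := by
      funext i j; simp [matRe, conjTranspose_apply, Matrix.sub_apply, hCmi j i, hCpi j i]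
    have hC : quadC Cm Cp = fromBlocks 0 (-(matIm (Cm - Cp))) (matIm (Cm + Cp)) 0 := by
      rw [quadC, h1, h2]
    have hMi := inv_upperTri _ (Mtri_anti Cm Cp Om Op _ _ hC hO s) hs
    simp only [transferG, quadB, quadD, hC, hReS, h1h, h2h, neg_zero]
    rw [← fromBlocks_toBlocks ((s • (1 : Matrix (Fin n ⊕ Fin n) (Fin n ⊕ Fin n) ℂ)
      - quadA Cm Cp Om Op)⁻¹), hMi]
    simp [fromBlocks_multiply, fromBlocks_neg, fromBlocks_add]
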